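/- (Achievability for indirect source coding) For any distribution P_Ŷ on 𝒴̂ and any ε′ ∈ [0,1], there exists an encoder f: 𝒳→{1,…,M} and decoder g: {1,…,M}→𝒴̂ such that P[d₂(Y, g(f(X))) > D₂] ≤ ε′(1 − E[η(ε′)^M]) + E[η(ε′)^M], where η(ε′) = P[π′(X,Ŷ) > ε′ | X] with Ŷ ~ P_Ŷ independent of X, and π′(x,ŷ) = P[d₂(Y,ŷ) > D₂ | X = x]. -/
import Mathlib


open Finset

/-- Achievability for indirect single-shot lossy source coding: for any codeword
distribution `PY` on `𝒴̂` and any `ε′ ∈ [0,1]`, there is a code `(f,g)` with `M`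
codewords whose excess-distortion probability satisfies
`P[d₂(Y, g(f(X))) > D₂] ≤ ε′(1 − E[η(ε′)^M]) + E[η(ε′)^M]`. -/
theorem indirect_achievability
    {𝒳 𝒴 𝒴h : Type*} [Fintype 𝒳] [Fintype 𝒴] [Fintype 𝒴h] [Nonempty 𝒴h]
    (p : 𝒳 × 𝒴 → ℝ) (hp0 : ∀ z, 0 ≤ p z) (hp1 : ∑ z : 𝒳 × 𝒴, p z = 1)
    (pX : 𝒳 → ℝ) (hpX : ∀ x, pX x = ∑ y : 𝒴, p (x, y))
    (d2 : 𝒴 → 𝒴h → ℝ) (hd2 : ∀ y yh, 0 ≤ d2 y yh) (D2 : ℝ) (hD2 : 0 ≤ D2)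
    (M : ℕ) (hM : 1 ≤ M)
    (PY : 𝒴h → ℝ) (hPY0 : ∀ yh, 0 ≤ PY yh) (hPY1 : ∑ yh : 𝒴h, PY yh = 1)
    (ε' : ℝ) (hε0 : 0 ≤ ε') (hε1 : ε' ≤ 1)
    (π' : 𝒳 → 𝒴h → ℝ)
    (hπ' : ∀ x yh, π' x yh = (∑ y : 𝒴, if d2 y yh > D2 then p (x, y) else 0) / pX x)
    (η : 𝒳 → ℝ)
    (hη : ∀ x, η x = ∑ yh : 𝒴h, if π' x yh > ε' then PY yh else 0) :
    ∃ (f : 𝒳 → Fin M) (g : Fin M → 𝒴h),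
      (∑ x : 𝒳, ∑ y : 𝒴, if d2 y (g (f x)) > D2 then p (x, y) else 0)
        ≤ ε' * (1 - ∑ x : 𝒳, pX x * (η x) ^ M) + ∑ x : 𝒳, pX x * (η x) ^ M := by
  classical
  have hMpos : 0 < M := hM
  have hpXnn : ∀ x, 0 ≤ pX x := fun x => by
    rw [hpX]; exact Finset.sum_nonneg fun y _ => hp0 _
  have hnum_nn : ∀ x yh, 0 ≤ ∑ y : 𝒴, (if d2 y yh > D2 then p (x, y) else 0) := by
    intro x yh
    exact Finset.sum_nonneg fun y _ => by split <;> [exact hp0 _; exact le_rfl]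
  have hnum_le : ∀ x yh, (∑ y : 𝒴, (if d2 y yh > D2 then p (x, y) else 0)) ≤ pX x := by
    intro x yh
    rw [hpX]
    exact Finset.sum_le_sum fun y _ => by split <;> [exact le_rfl; exact hp0 _]
  have hπnn : ∀ x yh, 0 ≤ π' x yh := fun x yh => by
    rw [hπ']; exact div_nonneg (hnum_nn x yh) (hpXnn x)
  have hπle1 : ∀ x yh, π' x yh ≤ 1 := by
    intro x yh
    rw [hπ']
    rcases eq_or_lt_of_le (hpXnn x) with h | h
    · rw [← h]; simp
    · exact div_le_one_of_le₀ (hnum_le x yh) (le_of_lt h)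
  have key : ∀ x yh, (∑ y : 𝒴, (if d2 y yh > D2 then p (x, y) else 0)) = pX x * π' x yh := by
    intro x yh
    rcases eq_or_lt_of_le (hpXnn x) with h | h
    · have hz : ∀ y : 𝒴, p (x, y) = 0 := by
        intro y
        have hzz : ∑ y : 𝒴, p (x, y) = 0 := (hpX x).symm.trans h.symm
        have := (Finset.sum_eq_zero_iff_of_nonneg (fun y _ => hp0 (x, y))).mp hzz
        exact this y (mem_univ y)
      rw [← h, zero_mul]
      exact Finset.sum_eq_zero fun y _ => by split <;> simp [hz y]
    · rw [hπ', mul_comm, div_mul_cancel₀ _ h.ne']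
  have hηnn : ∀ x, 0 ≤ η x := fun x => by
    rw [hη]; exact Finset.sum_nonneg fun yh _ => by split <;> [exact hPY0 _; exact le_rfl]
  have hηle1 : ∀ x, η x ≤ 1 := by
    intro x
    rw [hη, ← hPY1]
    exact Finset.sum_le_sum fun yh _ => by split <;> [exact le_rfl; exact hPY0 _]
  have hηMnn : ∀ x, 0 ≤ (η x) ^ M := fun x => pow_nonneg (hηnn x) M
  have hηMle1 : ∀ x, (η x) ^ M ≤ 1 := fun x => pow_le_one₀ (hηnn x) (hηle1 x)
  -- codebook weights
  set W : (Fin M → 𝒴h) → ℝ := fun c => ∏ j, PY (c j) with hW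
  have hWnn : ∀ c, 0 ≤ W c := fun c => Finset.prod_nonneg fun j _ => hPY0 _
  have hWsum : ∑ c : Fin M → 𝒴h, W c = 1 := by
    rw [← Fintype.sum_pow PY M, hPY1, one_pow]
  -- encoder for codebook c
  set enc : (Fin M → 𝒴h) → 𝒳 → Fin M := fun c x =>
    if h : ∃ j, π' x (c j) ≤ ε' then h.choose else ⟨0, hMpos⟩ with henc
  -- bad-codebook mass
  have hbad : ∀ x : 𝒳,
      ∑ c ∈ univ.filter (fun c : Fin M → 𝒴h => ∀ j, π' x (c j) > ε'), W c = (η x) ^ M := by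
    intro x
    have h1 : (η x) ^ M = ∑ c : Fin M → 𝒴h, ∏ j, (if π' x (c j) > ε' then PY (c j) else 0) := by
      rw [hη, Fintype.sum_pow (fun yh => if π' x yh > ε' then PY yh else 0) M]
    rw [h1, ← Finset.sum_filter_add_sum_filter_not univ (fun c : Fin M → 𝒴h => ∀ j, π' x (c j) > ε')
        (fun c => ∏ j, (if π' x (c j) > ε' then PY (c j) else 0))]
    have h2 : ∑ c ∈ univ.filter (fun c : Fin M → 𝒴h => ∀ j, π' x (c j) > ε'),
        (∏ j, (if π' x (c j) > ε' then PY (c j) else 0)) =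
        ∑ c ∈ univ.filter (fun c : Fin M → 𝒴h => ∀ j, π' x (c j) > ε'), W c := by
      refine Finset.sum_congr rfl fun c hc => ?_
      rw [mem_filter] at hc
      exact Finset.prod_congr rfl fun j _ => if_pos (hc.2 j)
    have h3 : ∑ c ∈ univ.filter (fun c : Fin M → 𝒴h => ¬ ∀ j, π' x (c j) > ε'),
        (∏ j, (if π' x (c j) > ε' then PY (c j) else 0)) = 0 := by
      refine Finset.sum_eq_zero fun c hc => ?_
      rw [mem_filter] at hc
      push_neg at hc
      obtain ⟨j, hj⟩ := hc.2
      exact Finset.prod_eq_zero (mem_univ j) (if_neg (not_lt.mpr hj))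
    rw [h2, h3, add_zero]
  -- per-x average bound
  have perx : ∀ x : 𝒳,
      ∑ c : Fin M → 𝒴h, W c * π' x (c (enc c x)) ≤ ε' * (1 - (η x) ^ M) + (η x) ^ M := by
    intro x
    rw [← Finset.sum_filter_add_sum_filter_not univ (fun c : Fin M → 𝒴h => ∀ j, π' x (c j) > ε')
        (fun c => W c * π' x (c (enc c x)))]
    have hgoodmass : ∑ c ∈ univ.filter (fun c : Fin M → 𝒴h => ¬ ∀ j, π' x (c j) > ε'), W c
        = 1 - (η x) ^ M := by
      have := Finset.sum_filter_add_sum_filter_not univ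
        (fun c : Fin M → 𝒴h => ∀ j, π' x (c j) > ε') W
      rw [hWsum, hbad x] at this
      linarith
    have hb : ∑ c ∈ univ.filter (fun c : Fin M → 𝒴h => ∀ j, π' x (c j) > ε'),
        W c * π' x (c (enc c x)) ≤ (η x) ^ M := by
      rw [← hbad x]
      refine Finset.sum_le_sum fun c _ => ?_
      calc W c * π' x (c (enc c x)) ≤ W c * 1 :=
            mul_le_mul_of_nonneg_left (hπle1 _ _) (hWnn c)
        _ = W c := mul_one _
    have hg : ∑ c ∈ univ.filter (fun c : Fin M → 𝒴h => ¬ ∀ j, π' x (c j) > ε'),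
        W c * π' x (c (enc c x)) ≤ ε' * (1 - (η x) ^ M) := by
      rw [← hgoodmass, Finset.mul_sum]
      refine Finset.sum_le_sum fun c hc => ?_
      rw [mem_filter] at hc
      push_neg at hc
      obtain ⟨j, hj⟩ := hc.2
      have hex : ∃ j, π' x (c j) ≤ ε' := ⟨j, hj⟩
      have hch : π' x (c (enc c x)) ≤ ε' := by
        rw [henc]; simp only [dif_pos hex]; exact hex.choose_spec
      calc W c * π' x (c (enc c x)) ≤ W c * ε' :=
            mul_le_mul_of_nonneg_left hch (hWnn c)
        _ = ε' * W c := mul_comm _ _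
    linarith
  -- total mass of pX
  have hpXsum : ∑ x : 𝒳, pX x = 1 := by
    rw [← hp1, Fintype.sum_prod_type]
    exact Finset.sum_congr rfl fun x _ => hpX x
  -- total average bound
  set T : (Fin M → 𝒴h) → ℝ := fun c => ∑ x, pX x * π' x (c (enc c x)) with hT
  set R : ℝ := ε' * (1 - ∑ x : 𝒳, pX x * (η x) ^ M) + ∑ x : 𝒳, pX x * (η x) ^ M with hR
  have havg : ∑ c : Fin M → 𝒴h, W c * T c ≤ R := by
    have h1 : ∑ c : Fin M → 𝒴h, W c * T c
        = ∑ x, pX x * ∑ c : Fin M → 𝒴h, W c * π' x (c (enc c x)) := by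
      simp only [hT, Finset.mul_sum]
      rw [Finset.sum_comm]
      exact Finset.sum_congr rfl fun x _ => Finset.sum_congr rfl fun c _ => by ring
    have h2 : ∑ x, pX x * (∑ c : Fin M → 𝒴h, W c * π' x (c (enc c x)))
        ≤ ∑ x, pX x * (ε' * (1 - (η x) ^ M) + (η x) ^ M) :=
      Finset.sum_le_sum fun x _ => mul_le_mul_of_nonneg_left (perx x) (hpXnn x)
    have h3 : ∑ x, pX x * (ε' * (1 - (η x) ^ M) + (η x) ^ M)
        = ε' * (∑ x, pX x) - ε' * (∑ x, pX x * (η x) ^ M) + ∑ x, pX x * (η x) ^ M := by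
      rw [Finset.mul_sum, Finset.mul_sum, ← Finset.sum_sub_distrib, ← Finset.sum_add_distrib]
      exact Finset.sum_congr rfl fun x _ => by ring
    rw [h1]
    calc _ ≤ _ := h2
      _ = R := by rw [h3, hpXsum, hR]; ring
  obtain ⟨c0, hc0⟩ : ∃ c : Fin M → 𝒴h, T c ≤ R := by
    by_contra hcon
    push_neg at hcon
    have hex : ∃ c : Fin M → 𝒴h, W c ≠ 0 := by
      by_contra hall
      push_neg at hall
      rw [Finset.sum_eq_zero (fun c _ => hall c)] at hWsum
      norm_num at hWsum
    obtain ⟨cw, hcw⟩ := hex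
    have hcwpos : 0 < W cw := lt_of_le_of_ne (hWnn cw) (Ne.symm hcw)
    have hlt : ∑ c : Fin M → 𝒴h, W c * R < ∑ c : Fin M → 𝒴h, W c * T c :=
      Finset.sum_lt_sum (fun c _ => mul_le_mul_of_nonneg_left (hcon c).le (hWnn c))
        ⟨cw, mem_univ cw, mul_lt_mul_of_pos_left (hcon cw) hcwpos⟩
    rw [← Finset.sum_mul, hWsum, one_mul] at hlt
    linarith
  refine ⟨enc c0, c0, ?_⟩
  calc (∑ x : 𝒳, ∑ y : 𝒴, if d2 y (c0 (enc c0 x)) > D2 then p (x, y) else 0)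
      = T c0 := Finset.sum_congr rfl fun x _ => key x _
    _ ≤ R := hc0
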